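/- arXiv:2512.21464 — 2 statements merged into one kernel-verified Lean document; each statement's English description precedes it below -/
import Mathlib

section
/- Let A, B ∈ ℝ^{n×n} be positive semidefinite. There exists a matrix T ∈ ℝ^{n×n} with T·A·Tᵀ = B and trace(A·T) = trace(√(√A·B·√A)) (i.e., an optimal transport matrix from A to B exists) if and only if rank(A) ≥ rank(B). Moreover, when rank(A) ≥ rank(B), such a T can be chosen to be symmetric. -/
open Matrix

/-- The positive semidefinite square root of a psd matrix (junk value `0` otherwise). -/
noncomputable def psdSqrt {n : ℕ} (M : Matrix (Fin n) (Fin n) ℝ) : Matrix (Fin n) (Fin n) ℝ :=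
  letI := Classical.propDecidable M.PosSemidef
  if h : M.PosSemidef then
    (h.1.eigenvectorUnitary : Matrix (Fin n) (Fin n) ℝ) * diagonal (Real.sqrt ∘ h.1.eigenvalues) *
      (star h.1.eigenvectorUnitary : Matrix (Fin n) (Fin n) ℝ)
  else 0

/-- `trace √(√A·B·√A)`. -/
noncomputable def sqrtTr {n : ℕ} (A B : Matrix (Fin n) (Fin n) ℝ) : ℝ :=
  (psdSqrt (psdSqrt A * B * psdSqrt A)).trace

/-- `T` is an optimal transport matrix from `A` to `B`. -/
def IsOT {n : ℕ} (A B T : Matrix (Fin n) (Fin n) ℝ) : Prop :=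
  T * A * Tᵀ = B ∧ (A * T).trace = sqrtTr A B

/-- Squared Bures–Wasserstein distance. -/
noncomputable def W2sq {n : ℕ} (A B : Matrix (Fin n) (Fin n) ℝ) : ℝ :=
  A.trace + B.trace - 2 * sqrtTr A B

/-!
Write `S = √A`, `N = √(S B S)` and `R` for the inverse of `S` on the range of `A`, extended by
zero on its kernel (as `cfc (fun x => (√x)⁻¹) A`, this relies on `0⁻¹ = 0`). Since
`(√B S)ᵀ (√B S) = S B S = N²`, the maps `√B S` and `N` have the same Gram matrix, so
`√B S x ↦ N x` is an isometry; because `rank B ≤ rank A` it extends to an isometry `U` from the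
range of `√B` into the range of `S`. Then `F = U √B` satisfies `Fᵀ F = B`, `F S = N` and
`S R F = F`, and the symmetric matrix `T = Fᵀ R + R F - R N R` satisfies `T A = Fᵀ S` and
`S T = F`, hence `T A T = B` and `tr (A T) = tr N`. Conversely, `rank (T A Tᵀ) ≤ rank A`.
-/

open Module
open scoped InnerProductSpace

section LinearIsometry

variable {𝕜 E F X : Type*} [RCLike 𝕜]
  [NormedAddCommGroup E] [InnerProductSpace 𝕜 E] [FiniteDimensional 𝕜 E]
  [NormedAddCommGroup F] [InnerProductSpace 𝕜 F] [FiniteDimensional 𝕜 F]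
  [AddCommGroup X] [Module 𝕜 X]

theorem nonempty_linearIsometry_of_finrank_le (h : finrank 𝕜 E ≤ finrank 𝕜 F) :
    Nonempty (E →ₗᵢ[𝕜] F) := by
  let v : Fin (finrank 𝕜 E) → F := stdOrthonormalBasis 𝕜 F ∘ Fin.castLE h
  have hv : Orthonormal 𝕜 v :=
    (stdOrthonormalBasis 𝕜 F).orthonormal.comp _ (Fin.castLE_injective h)
  let K := Submodule.span 𝕜 (Set.range v)
  have hK : finrank 𝕜 E = finrank 𝕜 K := by
    rw [finrank_span_eq_card hv.linearIndependent, Fintype.card_fin]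
  exact ⟨K.subtypeₗᵢ.comp ((stdOrthonormalBasis 𝕜 E).repr.trans
    ((stdOrthonormalBasis 𝕜 K).reindex (finCongr hK.symm)).repr.symm).toLinearIsometry⟩

theorem LinearMap.exists_linearIsometry_comp_eq (f g : X →ₗ[𝕜] E)
    (h : ∀ x y, ⟪f x, f y⟫_𝕜 = ⟪g x, g y⟫_𝕜) : ∃ u : E →ₗᵢ[𝕜] E, ∀ x, u (f x) = g x := by
  obtain ⟨s, hs⟩ := f.rangeRestrict.exists_rightInverse_of_surjective f.range_rangeRestrict
  have hfs : ∀ a, f (s a) = a := fun a => congrArg Subtype.val (LinearMap.congr_fun hs a)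
  let φ : LinearMap.range f →ₗᵢ[𝕜] E := (g ∘ₗ s).isometryOfInner fun a b => by
    rw [LinearMap.comp_apply, LinearMap.comp_apply, ← h, hfs, hfs, Submodule.coe_inner]
  refine ⟨φ.extend, fun x => ?_⟩
  have hfx : f x = (f.rangeRestrict x : E) := rfl
  have hker : f (s (f.rangeRestrict x) - x) = 0 := by rw [map_sub, hfs, sub_eq_zero]; rfl
  have hg : g (s (f.rangeRestrict x) - x) = 0 := by
    rw [← inner_self_eq_zero (𝕜 := 𝕜), ← h, hker, inner_zero_left]
  rw [hfx, LinearIsometry.extend_apply]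
  exact sub_eq_zero.mp (by rwa [map_sub] at hg)

theorem LinearMap.exists_linearIsometry_comp_eq_of_finrank_le (f : X →ₗ[𝕜] E) (g : X →ₗ[𝕜] F)
    (h : ∀ x y, ⟪f x, f y⟫_𝕜 = ⟪g x, g y⟫_𝕜) (hEF : finrank 𝕜 E ≤ finrank 𝕜 F) :
    ∃ u : E →ₗᵢ[𝕜] F, ∀ x, u (f x) = g x := by
  obtain ⟨ι⟩ := nonempty_linearIsometry_of_finrank_le hEF
  obtain ⟨v, hv⟩ := (ι.toLinearMap ∘ₗ f).exists_linearIsometry_comp_eq g (by simpa using h)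
  exact ⟨v.comp ι, hv⟩

end LinearIsometry

namespace Matrix

variable {𝕜 m n p q k : Type*} [RCLike 𝕜] [Fintype m] [DecidableEq m] [Fintype n] [DecidableEq n]
  [Fintype p] [DecidableEq p] [Fintype q] [DecidableEq q] [Fintype k] [DecidableEq k]

theorem inner_toEuclideanLin_toEuclideanLin (X : Matrix m n 𝕜) (x y : EuclideanSpace 𝕜 n) :
    ⟪toEuclideanLin X x, toEuclideanLin X y⟫_𝕜 = ⟪x, toEuclideanLin (Xᴴ * X) y⟫_𝕜 := by
  rw [toLpLin_mul_same, toEuclideanLin_conjTranspose_eq_adjoint, LinearMap.comp_apply,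
    LinearMap.adjoint_inner_right]

theorem conjTranspose_mul_self_eq_iff_inner {X : Matrix m n 𝕜} {Y : Matrix p n 𝕜} :
    Xᴴ * X = Yᴴ * Y ↔ ∀ x y, ⟪toEuclideanLin X x, toEuclideanLin X y⟫_𝕜 =
      ⟪toEuclideanLin Y x, toEuclideanLin Y y⟫_𝕜 := by
  simp only [inner_toEuclideanLin_toEuclideanLin]
  refine ⟨fun h x y => by rw [h], fun h => toEuclideanLin.injective ?_⟩
  exact LinearMap.ext fun y => ext_inner_left 𝕜 fun x => h x y

omit [DecidableEq m] in
theorem finrank_range_toEuclideanLin (X : Matrix m n 𝕜) :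
    finrank 𝕜 (LinearMap.range (toEuclideanLin X)) = X.rank := by
  rw [rank_eq_finrank_range_toLin X (PiLp.basisFun 2 𝕜 m) (PiLp.basisFun 2 𝕜 n)]
  rfl

theorem exists_conjTranspose_mul_self_eq_and_mul_eq {X : Matrix m n 𝕜} {C : Matrix n k 𝕜}
    {N : Matrix p k 𝕜} {Z : Matrix p q 𝕜} (hgram : (X * C)ᴴ * (X * C) = Nᴴ * N)
    (hN : LinearMap.range (toEuclideanLin N) ≤ LinearMap.range (toEuclideanLin Z))
    (hrank : X.rank ≤ Z.rank) :
    ∃ F : Matrix p n 𝕜, Fᴴ * F = Xᴴ * X ∧ F * C = N ∧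
      LinearMap.range (toEuclideanLin F) ≤ LinearMap.range (toEuclideanLin Z) := by
  let f := (toEuclideanLin X).rangeRestrict ∘ₗ toEuclideanLin C
  let g := (toEuclideanLin N).codRestrict (LinearMap.range (toEuclideanLin Z))
    fun x => hN ⟨x, rfl⟩
  have hfg : ∀ x y, ⟪f x, f y⟫_𝕜 = ⟪g x, g y⟫_𝕜 := fun x y => by
    have h := conjTranspose_mul_self_eq_iff_inner.mp hgram x y
    rwa [toLpLin_mul_same] at h
  have hdim : finrank 𝕜 (LinearMap.range (toEuclideanLin X)) ≤
      finrank 𝕜 (LinearMap.range (toEuclideanLin Z)) := by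
    rwa [finrank_range_toEuclideanLin, finrank_range_toEuclideanLin]
  obtain ⟨u, hu⟩ := LinearMap.exists_linearIsometry_comp_eq_of_finrank_le (𝕜 := 𝕜)
    (E := LinearMap.range (toEuclideanLin X)) (F := LinearMap.range (toEuclideanLin Z))
    f g hfg hdim
  let ℓ : EuclideanSpace 𝕜 n →ₗ[𝕜] EuclideanSpace 𝕜 p :=
    (LinearMap.range (toEuclideanLin Z)).subtype ∘ₗ u.toLinearMap ∘ₗ
      (toEuclideanLin X).rangeRestrict
  obtain ⟨F, hF⟩ : ∃ F : Matrix p n 𝕜, toEuclideanLin F = ℓ :=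
    ⟨toEuclideanLin.symm ℓ, toEuclideanLin.apply_symm_apply ℓ⟩
  refine ⟨F, ?_, toEuclideanLin.injective ?_, ?_⟩
  · refine conjTranspose_mul_self_eq_iff_inner.mpr fun x y => ?_
    rw [hF]
    exact u.inner_map_map _ _
  · rw [toLpLin_mul_same, hF]
    exact LinearMap.ext fun x => congrArg Subtype.val (hu x)
  · rw [hF]
    rintro _ ⟨x, rfl⟩
    exact (u _).2

theorem mul_eq_self_of_range_le {P : Matrix p p 𝕜} {Z : Matrix p q 𝕜} {F : Matrix p n 𝕜}
    (hPZ : P * Z = Z)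
    (hF : LinearMap.range (toEuclideanLin F) ≤ LinearMap.range (toEuclideanLin Z)) :
    P * F = F := by
  refine toEuclideanLin.injective (LinearMap.ext fun x => ?_)
  obtain ⟨y, hy⟩ := hF ⟨x, rfl⟩
  rw [toLpLin_mul_same, LinearMap.comp_apply, ← hy, ← LinearMap.comp_apply, ← toLpLin_mul_same,
    hPZ]

end Matrix

namespace Matrix

variable {α n : Type*} [CommRing α] [Fintype n]

theorem exists_isSymm_mul_mul_transpose_eq {A B S R F : Matrix n n α} (hS : Sᵀ = S)
    (hR : Rᵀ = R) (hSS : S * S = A) (hRA : R * A = S) (hSRF : S * R * F = F)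
    (hFF : Fᵀ * F = B) (hFS : (F * S)ᵀ = F * S) :
    ∃ T : Matrix n n α, T.IsSymm ∧ T * A * Tᵀ = B ∧ (A * T).trace = (F * S).trace := by
  set T := Fᵀ * R + R * F - R * (F * S) * R with hTdef
  have hT : Tᵀ = T := by
    rw [hTdef, transpose_sub, transpose_add, transpose_mul, transpose_mul, transpose_mul,
      transpose_mul, hFS, transpose_transpose, hR]
    simp only [Matrix.mul_assoc]
    abel
  have hTA : T * A = Fᵀ * S := by
    rw [Matrix.sub_mul, Matrix.add_mul, Matrix.mul_assoc, hRA, Matrix.mul_assoc _ R, hRA,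
      Matrix.mul_assoc R, Matrix.mul_assoc R, Matrix.mul_assoc F, hSS]
    abel
  have hST : S * T = F := by
    have hSF : S * Fᵀ = F * S := by rw [← hFS, transpose_mul, hS]
    rw [Matrix.mul_sub, Matrix.mul_add, ← Matrix.mul_assoc, hSF, ← Matrix.mul_assoc, hSRF,
      ← Matrix.mul_assoc, ← Matrix.mul_assoc, ← Matrix.mul_assoc, hSRF]
    abel
  refine ⟨T, hT, ?_, ?_⟩
  · rw [hT, hTA, Matrix.mul_assoc, hST, hFF]
  · rw [trace_mul_comm, hTA, ← trace_transpose, transpose_mul, transpose_transpose, hS,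
      trace_mul_comm]

end Matrix

namespace Matrix

variable {n : Type*} [Fintype n] [DecidableEq n]

theorem transpose_cfc (f : ℝ → ℝ) (X : Matrix n n ℝ) : (cfc f X)ᵀ = cfc f X := by
  rw [← conjTranspose_eq_transpose_of_trivial]
  exact (cfc_predicate f X).star_eq

namespace PosSemidef

variable {X : Matrix n n ℝ} (hX : X.PosSemidef)
include hX

theorem cfc_mul_cfc {f g h : ℝ → ℝ} (hfgh : ∀ x, 0 ≤ x → f x * g x = h x) :
    cfc f X * cfc g X = cfc h X := by
  have hfin : (spectrum ℝ X).Finite := finite_real_spectrum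
  rw [← cfc_mul f g X (hfin.continuousOn f) (hfin.continuousOn g)]
  exact cfc_congr fun x hx =>
    hfgh x ((posSemidef_iff_isHermitian_and_spectrum_nonneg.mp hX).2 hx)

theorem cfc_sqrt_mul_self : cfc Real.sqrt X * cfc Real.sqrt X = X := by
  rw [hX.cfc_mul_cfc (f := Real.sqrt) (g := Real.sqrt) (h := id) fun x hx =>
    Real.mul_self_sqrt hx, cfc_id ℝ X hX.1.isSelfAdjoint]

theorem cfc_inv_sqrt_mul_self : cfc (fun x => (√x)⁻¹) X * X = cfc Real.sqrt X := by
  have h := hX.cfc_mul_cfc (f := fun x => (√x)⁻¹) (g := id) fun x _ => by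
    rw [id, inv_mul_eq_div, Real.div_sqrt]
  rwa [cfc_id ℝ X hX.1.isSelfAdjoint] at h

theorem mul_cfc_inv_sqrt : X * cfc (fun x => (√x)⁻¹) X = cfc Real.sqrt X := by
  have h := hX.cfc_mul_cfc (f := id) (g := fun x => (√x)⁻¹) fun x _ => by
    rw [id, ← div_eq_mul_inv, Real.div_sqrt]
  rwa [cfc_id ℝ X hX.1.isSelfAdjoint] at h

theorem cfc_sqrt_mul_cfc_inv_sqrt_mul_cfc_sqrt :
    cfc Real.sqrt X * cfc (fun x => (√x)⁻¹) X * cfc Real.sqrt X = cfc Real.sqrt X := by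
  rw [hX.cfc_mul_cfc fun _ _ => rfl, hX.cfc_mul_cfc fun x _ => mul_inv_mul_cancel (√x)]

theorem rank_cfc_sqrt : (cfc Real.sqrt X).rank = X.rank := by
  rw [← rank_conjTranspose_mul_self, conjTranspose_eq_transpose_of_trivial, transpose_cfc,
    hX.cfc_sqrt_mul_self]

end PosSemidef

end Matrix

open Matrix

theorem psdSqrt_eq_cfc {n : ℕ} {M : Matrix (Fin n) (Fin n) ℝ} (hM : M.PosSemidef) :
    psdSqrt M = cfc Real.sqrt M := by
  rw [psdSqrt, dif_pos hM, hM.1.cfc_eq, IsHermitian.cfc, Unitary.conjStarAlgAut_apply]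
  rfl

theorem exists_isOT_isSymm {n : ℕ} {A B : Matrix (Fin n) (Fin n) ℝ} (hA : A.PosSemidef)
    (hB : B.PosSemidef) (hr : B.rank ≤ A.rank) : ∃ T, IsOT A B T ∧ T.IsSymm := by
  set SA := cfc Real.sqrt A
  set SB := cfc Real.sqrt B
  have hSA : SAᵀ = SA := transpose_cfc _ _
  have hSB : SBᵀ = SB := transpose_cfc _ _
  have hM : (SA * B * SA).PosSemidef := by
    simpa only [conjTranspose_eq_transpose_of_trivial, hSA] using
      hB.conjTranspose_mul_mul_same SA
  set N := cfc Real.sqrt (SA * B * SA)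
  have hNt : Nᵀ = N := transpose_cfc _ _
  have hNN : N * N = SA * B * SA := hM.cfc_sqrt_mul_self
  have hSBSB : SB * SB = B := hB.cfc_sqrt_mul_self
  have hgram : (SB * SA)ᴴ * (SB * SA) = Nᴴ * N := by
    rw [conjTranspose_eq_transpose_of_trivial, conjTranspose_eq_transpose_of_trivial, hNt, hNN,
      transpose_mul, hSA, hSB, ← hSBSB]
    simp only [Matrix.mul_assoc]
  have hN : LinearMap.range (toEuclideanLin N) ≤ LinearMap.range (toEuclideanLin SA) := by
    have hMN : SA * B * SA * cfc (fun x => (√x)⁻¹) (SA * B * SA) = N := hM.mul_cfc_inv_sqrt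
    rw [← hMN, Matrix.mul_assoc, Matrix.mul_assoc, toLpLin_mul_same]
    exact LinearMap.range_comp_le_range _ _
  have hrank : SB.rank ≤ SA.rank := by rwa [hA.rank_cfc_sqrt, hB.rank_cfc_sqrt]
  obtain ⟨F, hFF, hFS, hFrange⟩ := exists_conjTranspose_mul_self_eq_and_mul_eq hgram hN hrank
  rw [conjTranspose_eq_transpose_of_trivial, conjTranspose_eq_transpose_of_trivial, hSB,
    hSBSB] at hFF
  obtain ⟨T, hT, hTAT, htr⟩ := exists_isSymm_mul_mul_transpose_eq hSA (transpose_cfc _ _)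
    hA.cfc_sqrt_mul_self hA.cfc_inv_sqrt_mul_self
    (mul_eq_self_of_range_le hA.cfc_sqrt_mul_cfc_inv_sqrt_mul_cfc_sqrt hFrange) hFF
    (by rw [hFS, hNt])
  refine ⟨T, ⟨hTAT, ?_⟩, hT⟩
  rw [htr, hFS, sqrtTr, psdSqrt_eq_cfc hA, psdSqrt_eq_cfc hM]

/-- An optimal transport matrix from `A` to `B` exists iff
`rank A ≥ rank B`, in which case it can be chosen to be symmetric. -/
theorem stmt1 {n : ℕ} (A B : Matrix (Fin n) (Fin n) ℝ)
    (hA : A.PosSemidef) (hB : B.PosSemidef) :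
    ((∃ T : Matrix (Fin n) (Fin n) ℝ, IsOT A B T) ↔ B.rank ≤ A.rank) ∧
      (B.rank ≤ A.rank → ∃ T : Matrix (Fin n) (Fin n) ℝ, IsOT A B T ∧ T.IsSymm) := by
  refine ⟨⟨fun ⟨T, hT⟩ => ?_, fun hr => ?_⟩, exists_isOT_isSymm hA hB⟩
  · rw [← hT.1]
    exact (rank_mul_le_left _ _).trans (rank_mul_le_right _ _)
  · obtain ⟨T, hT, -⟩ := exists_isOT_isSymm hA hB hr
    exact ⟨T, hT⟩
end

section
/- Let A, B ∈ ℝ^{n×n} be positive semidefinite. The following are equivalent: (i) there exists a positive semidefinite matrix T with T·A·Tᵀ = B; (ii) there exists an optimal transport matrix from A to B, and any two optimal transport matrices T₁, T₂ from A to B satisfy T₁·A = T₂·A (i.e., they agree on range(A), hence N(0,A)-almost surely); (iii) range(B) = range(B·A); (iv) range(B) ∩ ker(A) = {0}. -/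
/-!
Under (iv), `ker (√B A √B) = ker √B`, so `T = √B (√B A √B)^{-1/2} √B`, with the inverse square root
taken on the support, is a psd transport matrix.

Write `S = √A`. For a transport matrix `T`, `N = S T S` satisfies `N Nᵀ = S B S`. If `T` is psd, so
is `N`, hence `N = √(S B S)` and `T` is optimal. If `T` is optimal, `tr N = tr √(S B S)`, and the
equality case of `tr N ≤ tr √(N Nᵀ)` (read off after diagonalising `√(S B S)`) gives
`N = √(S B S)`. This determines `S (T A) = N S`, hence `A (T A)`; as the columns of `T A` lie in
`range B`, (iv) determines `T A`.

Conversely, a vector `v ∈ range B ∩ ker A` has the form `v = T A u`. For psd `T`,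
`(A u)ᵀ T (A u) = uᵀ A v = 0` forces `v = T A u = 0`. For optimal `T` and `v ≠ 0`, the perturbation
`T - 2 v uᵀ / (uᵀ A u)` is again optimal but changes `T A`.

Finally (iii) ⇔ (iv) is a rank count: `rank (B A) = rank (A B)`, and (iv) says exactly that
`ker (A B) = ker B`.
-/

open Matrix

open scoped MatrixOrder

namespace Matrix

variable {R : Type*} {l m n : Type*}

theorem PosSemidef.isSymm {A : Matrix m m ℝ} (hA : A.PosSemidef) : A.IsSymm :=
  isHermitian_iff_isSymm.mp hA.1

variable [Fintype m]

section

variable [Fintype n]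

theorem PosSemidef.mul_mul_transpose_same {A : Matrix m m ℝ} (hA : A.PosSemidef)
    (B : Matrix n m ℝ) : (B * A * Bᵀ).PosSemidef := by
  simpa only [conjTranspose_eq_transpose_of_trivial] using hA.mul_mul_conjTranspose_same B

theorem range_mulVecLin_mul_le [CommSemiring R] (M : Matrix l m R) (N : Matrix m n R) :
    LinearMap.range (M * N).mulVecLin ≤ LinearMap.range M.mulVecLin := by
  rw [mulVecLin_mul]
  exact LinearMap.range_comp_le_range _ _

theorem ker_mulVecLin_le_ker_mul [CommSemiring R] (M : Matrix l m R) (N : Matrix m n R) :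
    LinearMap.ker N.mulVecLin ≤ LinearMap.ker (M * N).mulVecLin := by
  rw [mulVecLin_mul]
  exact LinearMap.ker_le_ker_comp _ _

theorem range_mulVecLin_mul_transpose_self [Field R] [LinearOrder R] [IsStrictOrderedRing R]
    (M : Matrix m n R) :
    LinearMap.range (M * Mᵀ).mulVecLin = LinearMap.range M.mulVecLin :=
  Submodule.eq_of_le_of_finrank_eq (range_mulVecLin_mul_le M Mᵀ) (rank_self_mul_transpose M)

theorem range_mulVecLin_mul_eq_iff_rank_eq [Field R] (M : Matrix l m R) (N : Matrix m n R) :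
    LinearMap.range (M * N).mulVecLin = LinearMap.range M.mulVecLin ↔ (M * N).rank = M.rank :=
  ⟨fun h => congr_arg (fun S : Submodule R (l → R) => Module.finrank R S) h,
    Submodule.eq_of_le_of_finrank_eq (range_mulVecLin_mul_le M N)⟩

theorem ker_mulVecLin_mul_eq_iff_rank_eq [Field R] (M : Matrix l m R) (N : Matrix m n R) :
    LinearMap.ker (M * N).mulVecLin = LinearMap.ker N.mulVecLin ↔ (M * N).rank = N.rank := by
  have hMN := LinearMap.finrank_range_add_finrank_ker (M * N).mulVecLin
  have hN := LinearMap.finrank_range_add_finrank_ker N.mulVecLin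
  unfold rank
  refine ⟨fun h => ?_, fun h => (Submodule.eq_of_le_of_finrank_eq
    (ker_mulVecLin_le_ker_mul M N) ?_).symm⟩
  · rw [h] at hMN
    omega
  · omega

theorem range_inf_ker_eq_bot_iff_ker_mul_eq [CommSemiring R] (M : Matrix l m R)
    (N : Matrix m n R) :
    LinearMap.range N.mulVecLin ⊓ LinearMap.ker M.mulVecLin = ⊥ ↔
      LinearMap.ker (M * N).mulVecLin = LinearMap.ker N.mulVecLin := by
  constructor
  · intro h
    refine le_antisymm (fun x hx => ?_) (ker_mulVecLin_le_ker_mul M N)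
    have hNx : N *ᵥ x ∈ LinearMap.range N.mulVecLin ⊓ LinearMap.ker M.mulVecLin :=
      ⟨⟨x, rfl⟩, by simpa [mulVec_mulVec] using hx⟩
    rw [h] at hNx
    simpa using hNx
  · intro h
    rw [Submodule.eq_bot_iff]
    rintro _ ⟨⟨x, rfl⟩, hx⟩
    have hMNx : x ∈ LinearMap.ker (M * N).mulVecLin := by simpa [← mulVec_mulVec] using hx
    rw [h] at hMNx
    simpa using hMNx

theorem range_eq_range_mul_iff_range_inf_ker_eq_bot [Field R] {A B : Matrix m m R}
    (hA : A.IsSymm) (hB : B.IsSymm) :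
    LinearMap.range B.mulVecLin = LinearMap.range (B * A).mulVecLin ↔
      LinearMap.range B.mulVecLin ⊓ LinearMap.ker A.mulVecLin = ⊥ := by
  rw [eq_comm, range_mulVecLin_mul_eq_iff_rank_eq, range_inf_ker_eq_bot_iff_ker_mul_eq,
    ker_mulVecLin_mul_eq_iff_rank_eq, ← rank_transpose (A * B), transpose_mul, hA.eq, hB.eq]

end

theorem exists_mulVec_mulVec_eq_of_mem_range [CommSemiring R] {A B T : Matrix m m R}
    (h : T * A * Tᵀ = B) {v : m → R} (hv : v ∈ LinearMap.range B.mulVecLin) :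
    ∃ u, T *ᵥ (A *ᵥ u) = v := by
  obtain ⟨y, rfl⟩ := hv
  exact ⟨Tᵀ *ᵥ y, by rw [← h, mulVecLin_apply, mulVec_mulVec, mulVec_mulVec]⟩

theorem range_inf_ker_eq_bot_of_posSemidef_transport {A B T : Matrix m m ℝ} (hA : A.IsSymm)
    (hT : T.PosSemidef) (h : T * A * Tᵀ = B) :
    LinearMap.range B.mulVecLin ⊓ LinearMap.ker A.mulVecLin = ⊥ := by
  rw [Submodule.eq_bot_iff]
  rintro v ⟨hv, hAv : A *ᵥ v = 0⟩
  obtain ⟨u, rfl⟩ := exists_mulVec_mulVec_eq_of_mem_range h hv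
  refine (hT.dotProduct_mulVec_zero_iff (A *ᵥ u)).mp ?_
  rw [star_trivial, dotProduct_comm, dotProduct_mulVec, ← mulVec_transpose, hA.eq, hAv,
    zero_dotProduct]

theorem ker_mul_mul_le_ker_of_range_inf_ker_eq_bot {A R : Matrix m m ℝ} (hA : A.PosSemidef)
    (hR : R.IsSymm) (h : LinearMap.range R.mulVecLin ⊓ LinearMap.ker A.mulVecLin = ⊥) :
    LinearMap.ker (R * A * R).mulVecLin ≤ LinearMap.ker R.mulVecLin := by
  intro x (hx : (R * A * R) *ᵥ x = 0)
  have hARx : A *ᵥ (R *ᵥ x) = 0 := by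
    refine (hA.dotProduct_mulVec_zero_iff (R *ᵥ x)).mp ?_
    rw [star_trivial, ← dotProduct_zero x, ← hx, ← mulVec_mulVec, ← mulVec_mulVec,
      dotProduct_mulVec x R, ← mulVec_transpose, hR.eq]
  have hRx : R *ᵥ x ∈ LinearMap.range R.mulVecLin ⊓ LinearMap.ker A.mulVecLin :=
    ⟨⟨x, rfl⟩, hARx⟩
  rw [h] at hRx
  exact hRx

section

variable [DecidableEq m]

theorem eq_diagonal_of_mul_transpose_eq_of_trace_eq {N : Matrix m m ℝ} {d : m → ℝ}
    (hd : ∀ i, 0 ≤ d i) (hN : N * Nᵀ = diagonal d * diagonal d) (htr : N.trace = ∑ i, d i) :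
    N = diagonal d := by
  rw [diagonal_mul_diagonal] at hN
  have hrow : ∀ i, ∑ j, N i j ^ 2 = d i ^ 2 := fun i => by
    simpa [sq, mul_apply] using congr_fun (congr_fun hN i) i
  have hdiag_le : ∀ i, N i i ≤ d i := fun i =>
    (le_abs_self _).trans <| abs_le_of_sq_le_sq
      ((Finset.single_le_sum (fun j _ => sq_nonneg (N i j)) (Finset.mem_univ i)).trans
        (hrow i).le) (hd i)
  have hdiag : ∀ i, N i i = d i := fun i =>
    (Finset.sum_eq_sum_iff_of_le fun i _ => hdiag_le i).mp htr i (Finset.mem_univ i)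
  ext i j
  rcases eq_or_ne i j with rfl | hij
  · simp [hdiag]
  · have hoff : ∑ k ∈ Finset.univ.erase i, N i k ^ 2 = 0 := by
      rw [Finset.sum_erase_eq_sub (Finset.mem_univ i), hrow, hdiag, sub_self]
    rw [diagonal_apply_ne _ hij]
    exact pow_eq_zero_iff two_ne_zero |>.mp <|
      (Finset.sum_eq_zero_iff_of_nonneg fun k _ => sq_nonneg (N i k)).mp hoff j
        (Finset.mem_erase.mpr ⟨hij.symm, Finset.mem_univ j⟩)

/-- Equality case of `tr N ≤ tr √(N Nᵀ)`. -/
theorem eq_of_mul_transpose_eq_mul_self_of_trace_eq {N C : Matrix m m ℝ} (hC : C.PosSemidef)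
    (hN : N * Nᵀ = C * C) (htr : N.trace = C.trace) : N = C := by
  set U := hC.1.eigenvectorUnitary
  set φ := Unitary.conjStarAlgAut ℝ (Matrix m m ℝ) (star U)
  have hφC : φ C = diagonal hC.1.eigenvalues := by
    simpa [φ, U] using hC.1.conjStarAlgAut_star_eigenvectorUnitary
  have htrφ : ∀ X, (φ X).trace = X.trace := fun X => by
    rw [Unitary.conjStarAlgAut_apply, trace_mul_cycle, Unitary.coe_star_mul_self, one_mul]
  have hstar : ∀ X : Matrix m m ℝ, star X = Xᵀ := fun X => by
    rw [star_eq_conjTranspose, conjTranspose_eq_transpose_of_trivial]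
  refine EquivLike.injective φ ?_
  rw [hφC]
  refine eq_diagonal_of_mul_transpose_eq_of_trace_eq hC.eigenvalues_nonneg ?_ ?_
  · rw [← hstar, ← map_star, ← map_mul, hstar, hN, map_mul, hφC]
  · rw [htrφ, htr, ← htrφ, hφC, trace_diagonal]

/-- Since `(√0)⁻¹ = 0`, this is the Moore–Penrose pseudo-inverse of `√M` for psd `M`. -/
noncomputable def pinvSqrt (M : Matrix m m ℝ) : Matrix m m ℝ := cfc (fun x => (√x)⁻¹) M

theorem posSemidef_pinvSqrt (M : Matrix m m ℝ) : (pinvSqrt M).PosSemidef :=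
  nonneg_iff_posSemidef.mp (cfc_nonneg fun x _ => by positivity)

theorem PosSemidef.mul_pinvSqrt_mul_mul_pinvSqrt {M : Matrix m m ℝ} (hM : M.PosSemidef) :
    M * (pinvSqrt M * M * pinvSqrt M) = M := by
  have hsa : IsSelfAdjoint M := hM.1
  have hc : ∀ f : ℝ → ℝ, ContinuousOn f (spectrum ℝ M) := fun f =>
    (Set.toFinite _).continuousOn f
  calc M * (pinvSqrt M * M * pinvSqrt M)
      = cfc id M * (cfc (fun x => (√x)⁻¹) M * cfc id M * cfc (fun x => (√x)⁻¹) M) := by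
        rw [cfc_id ℝ M, pinvSqrt]
    _ = cfc (fun x => x * ((√x)⁻¹ * x * (√x)⁻¹)) M := by
      rw [cfc_mul _ _ M (hc _) (hc _), cfc_mul _ _ M (hc _) (hc _), cfc_mul _ _ M (hc _) (hc _)]
      rfl
    _ = cfc id M := by
      refine cfc_congr fun x hx => ?_
      rw [id, show x * ((√x)⁻¹ * x * (√x)⁻¹) = x * (x / (√x * √x)) by ring,
        Real.mul_self_sqrt (spectrum_nonneg_of_nonneg hM.nonneg hx)]
      rcases eq_or_ne x 0 with h | h
      · simp [h]
      · rw [div_self h, mul_one]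
    _ = M := cfc_id ℝ M

theorem exists_posSemidef_mul_mul_eq_mul_self {A R : Matrix m m ℝ} (hA : A.PosSemidef)
    (hR : R.IsSymm) (hker : LinearMap.ker (R * A * R).mulVecLin ≤ LinearMap.ker R.mulVecLin) :
    ∃ T : Matrix m m ℝ, T.PosSemidef ∧ T * A * T = R * R := by
  set M := R * A * R
  have hM : M.PosSemidef := by simpa only [hR.eq] using hA.mul_mul_transpose_same R
  set P := pinvSqrt M
  have hRQ : R * (P * M * P) = R := by
    rw [ext_iff_mulVec]
    intro x
    have hx : x - (P * M * P) *ᵥ x ∈ LinearMap.ker M.mulVecLin := by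
      rw [LinearMap.mem_ker, mulVecLin_apply, mulVec_sub, mulVec_mulVec,
        hM.mul_pinvSqrt_mul_mul_pinvSqrt, sub_self]
    have hRx := hker hx
    rw [LinearMap.mem_ker, mulVecLin_apply, mulVec_sub, mulVec_mulVec, sub_eq_zero] at hRx
    exact hRx.symm
  refine ⟨R * P * R, by simpa only [hR.eq] using (posSemidef_pinvSqrt M).mul_mul_transpose_same R,
    ?_⟩
  calc R * P * R * A * (R * P * R) = R * (P * M * P) * R := by simp only [M, mul_assoc]
    _ = R * R := by rw [hRQ]

end

end Matrix

section

variable {n : ℕ} {A B M T X : Matrix (Fin n) (Fin n) ℝ}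

theorem psdSqrt_eq_sqrt (hM : M.PosSemidef) : psdSqrt M = CFC.sqrt M := by
  unfold psdSqrt
  rw [dif_pos hM, CFC.sqrt_eq_cfc, cfc_nnreal_eq_real _ M, hM.1.cfc_eq]
  simp only [IsHermitian.cfc, Unitary.conjStarAlgAut_apply]
  congr 2
  ext i j
  by_cases hij : i = j
  · subst hij
    simp [Real.coe_sqrt, Real.coe_toNNReal', max_eq_left (hM.eigenvalues_nonneg i)]
  · simp [hij]

theorem posSemidef_psdSqrt (hM : M.PosSemidef) : (psdSqrt M).PosSemidef := by
  rw [psdSqrt_eq_sqrt hM]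
  exact nonneg_iff_posSemidef.mp (CFC.sqrt_nonneg M)

theorem psdSqrt_mul_self (hM : M.PosSemidef) : psdSqrt M * psdSqrt M = M := by
  rw [psdSqrt_eq_sqrt hM]
  exact CFC.sqrt_mul_sqrt_self M hM.nonneg

theorem psdSqrt_mul_self_of_posSemidef (hX : X.PosSemidef) : psdSqrt (X * X) = X := by
  have hXX : (X * X).PosSemidef := by
    simpa only [hX.1.eq] using posSemidef_conjTranspose_mul_self X
  rw [psdSqrt_eq_sqrt hXX]
  exact CFC.sqrt_mul_self X hX.nonneg

theorem range_psdSqrt (hM : M.PosSemidef) :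
    LinearMap.range (psdSqrt M).mulVecLin = LinearMap.range M.mulVecLin := by
  have h := range_mulVecLin_mul_transpose_self (psdSqrt M)
  rwa [(posSemidef_psdSqrt hM).isSymm.eq, psdSqrt_mul_self hM, eq_comm] at h

theorem trace_mul_eq_trace_psdSqrt_mul_mul_psdSqrt (hA : A.PosSemidef) :
    (A * T).trace = (psdSqrt A * T * psdSqrt A).trace := by
  rw [trace_mul_cycle, psdSqrt_mul_self hA]

theorem isOT_of_posSemidef (hA : A.PosSemidef) (hT : T.PosSemidef) (h : T * A * Tᵀ = B) :
    IsOT A B T := by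
  have hS := (posSemidef_psdSqrt hA).isSymm.eq
  have hSTS : (psdSqrt A * T * psdSqrt A).PosSemidef := by
    simpa only [hS] using hT.mul_mul_transpose_same (psdSqrt A)
  have hsq : psdSqrt A * T * psdSqrt A * (psdSqrt A * T * psdSqrt A) =
      psdSqrt A * B * psdSqrt A := by
    calc _ = psdSqrt A * (T * (psdSqrt A * psdSqrt A) * Tᵀ) * psdSqrt A := by
          rw [hT.isSymm.eq]; simp only [mul_assoc]
      _ = _ := by rw [psdSqrt_mul_self hA, h]
  refine ⟨h, ?_⟩
  rw [trace_mul_eq_trace_psdSqrt_mul_mul_psdSqrt hA, sqrtTr, ← hsq,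
    psdSqrt_mul_self_of_posSemidef hSTS]

theorem IsOT.psdSqrt_mul_mul_psdSqrt (hA : A.PosSemidef) (hT : IsOT A B T) :
    psdSqrt A * T * psdSqrt A = psdSqrt (psdSqrt A * B * psdSqrt A) := by
  have hS := (posSemidef_psdSqrt hA).isSymm.eq
  have hSBS : (psdSqrt A * B * psdSqrt A).PosSemidef := by
    simpa only [hS, hT.1] using
      (hA.mul_mul_transpose_same T).mul_mul_transpose_same (psdSqrt A)
  apply eq_of_mul_transpose_eq_mul_self_of_trace_eq (posSemidef_psdSqrt hSBS)
  · calc _ = psdSqrt A * (T * (psdSqrt A * psdSqrt A) * Tᵀ) * psdSqrt A := by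
          simp only [transpose_mul, hS, mul_assoc]
      _ = _ := by rw [psdSqrt_mul_self hA, hT.1, psdSqrt_mul_self hSBS]
  · rw [← trace_mul_eq_trace_psdSqrt_mul_mul_psdSqrt hA, hT.2, sqrtTr]

theorem range_mul_le_of_mul_mul_transpose_eq (hA : A.PosSemidef) (h : T * A * Tᵀ = B) :
    LinearMap.range (T * A).mulVecLin ≤ LinearMap.range B.mulVecLin := by
  have hTS : T * psdSqrt A * (T * psdSqrt A)ᵀ = B := by
    calc _ = T * (psdSqrt A * psdSqrt A) * Tᵀ := by
          rw [transpose_mul, (posSemidef_psdSqrt hA).isSymm.eq]; simp only [mul_assoc]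
      _ = B := by rw [psdSqrt_mul_self hA, h]
  have hTA : T * A = T * psdSqrt A * psdSqrt A := by rw [mul_assoc, psdSqrt_mul_self hA]
  rw [← hTS, range_mulVecLin_mul_transpose_self, hTA]
  exact range_mulVecLin_mul_le _ _

theorem IsOT.mul_eq_mul (hA : A.PosSemidef)
    (h : LinearMap.range B.mulVecLin ⊓ LinearMap.ker A.mulVecLin = ⊥)
    {T₁ T₂ : Matrix (Fin n) (Fin n) ℝ}
    (h₁ : IsOT A B T₁) (h₂ : IsOT A B T₂) : T₁ * A = T₂ * A := by
  have hSTA : ∀ T, IsOT A B T →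
      psdSqrt A * (T * A) = psdSqrt (psdSqrt A * B * psdSqrt A) * psdSqrt A := fun T hT => by
    calc psdSqrt A * (T * A) = psdSqrt A * T * (psdSqrt A * psdSqrt A) := by
          rw [psdSqrt_mul_self hA, mul_assoc]
      _ = _ := by rw [← hT.psdSqrt_mul_mul_psdSqrt hA]; simp only [mul_assoc]
  rw [ext_iff_mulVec]
  intro x
  rw [← sub_eq_zero, ← Submodule.mem_bot ℝ, ← h]
  refine ⟨sub_mem (range_mul_le_of_mul_mul_transpose_eq hA h₁.1 ⟨x, rfl⟩)
    (range_mul_le_of_mul_mul_transpose_eq hA h₂.1 ⟨x, rfl⟩), LinearMap.mem_ker.mpr ?_⟩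
  have hAS : ∀ y, A *ᵥ y = psdSqrt A *ᵥ (psdSqrt A *ᵥ y) := fun y => by
    rw [mulVec_mulVec, psdSqrt_mul_self hA]
  rw [mulVecLin_apply, hAS (_ - _), mulVec_sub, mulVec_mulVec, mulVec_mulVec, hSTA T₁ h₁,
    hSTA T₂ h₂, sub_self, mulVec_zero]

/-- With `v = T A u ∈ ker A` and `α = uᵀ A u ≠ 0`, the cross terms `2 s v vᵀ` of the perturbation
`T + s v uᵀ` cancel its quadratic term `s² α v vᵀ` exactly when `s = -2 / α`, and `A v = 0` leaves
`tr (A T)` unchanged. -/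
theorem IsOT.add_vecMulVec (hA : A.IsSymm) (hT : IsOT A B T) {u : Fin n → ℝ}
    (hAv : A *ᵥ (T *ᵥ (A *ᵥ u)) = 0) (hα : u ⬝ᵥ A *ᵥ u ≠ 0) :
    IsOT A B (T + vecMulVec (T *ᵥ (A *ᵥ u)) ((-2 / (u ⬝ᵥ A *ᵥ u)) • u)) := by
  set v := T *ᵥ (A *ᵥ u)
  set α := u ⬝ᵥ A *ᵥ u
  set s := -2 / α
  have hvA : ∀ w, w ᵥ* A = A *ᵥ w := fun w => by rw [← mulVec_transpose, hA.eq]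
  have hETt : vecMulVec v (s • u) * A * Tᵀ = s • vecMulVec v v := by
    rw [vecMulVec_mul, vecMulVec_mul, vecMul_transpose, hvA, mulVec_smul, mulVec_smul,
      vecMulVec_smul]
  have hTEt : T * A * (vecMulVec v (s • u))ᵀ = s • vecMulVec v v := by
    rw [transpose_vecMulVec, mul_vecMulVec, ← mulVec_mulVec, mulVec_smul, mulVec_smul,
      smul_vecMulVec]
  have hEEt : vecMulVec v (s • u) * A * (vecMulVec v (s • u))ᵀ = (s * s * α) • vecMulVec v v := by
    rw [transpose_vecMulVec, vecMulVec_mul, vecMulVec_mul_vecMulVec, hvA, mulVec_smul,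
      smul_dotProduct, dotProduct_smul, dotProduct_comm, vecMulVec_smul, smul_smul, smul_eq_mul]
  have hcoeff : s + s + s * s * α = 0 := by
    simp only [s]
    field_simp
    ring
  constructor
  · calc (T + vecMulVec v (s • u)) * A * (T + vecMulVec v (s • u))ᵀ
        = T * A * Tᵀ + (vecMulVec v (s • u) * A * Tᵀ + T * A * (vecMulVec v (s • u))ᵀ +
            vecMulVec v (s • u) * A * (vecMulVec v (s • u))ᵀ) := by
          rw [transpose_add]; noncomm_ring
      _ = B := by rw [hETt, hTEt, hEEt, ← add_smul, ← add_smul, hcoeff, zero_smul, add_zero, hT.1]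
  · rw [mul_add, mul_vecMulVec, hAv, zero_vecMulVec, add_zero]
    exact hT.2

theorem range_inf_ker_eq_bot_of_isOT_unique (hA : A.PosSemidef) (hT : IsOT A B T)
    (huniq : ∀ T₁ T₂ : Matrix (Fin n) (Fin n) ℝ, IsOT A B T₁ → IsOT A B T₂ → T₁ * A = T₂ * A) :
    LinearMap.range B.mulVecLin ⊓ LinearMap.ker A.mulVecLin = ⊥ := by
  rw [Submodule.eq_bot_iff]
  rintro v ⟨hv, hAv : A *ᵥ v = 0⟩
  obtain ⟨u, rfl⟩ := exists_mulVec_mulVec_eq_of_mem_range hT.1 hv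
  by_contra hv0
  have hAu : A *ᵥ u ≠ 0 := fun h => hv0 (by rw [h, mulVec_zero])
  have hα : u ⬝ᵥ A *ᵥ u ≠ 0 := fun h =>
    hAu ((hA.dotProduct_mulVec_zero_iff u).mp (by rwa [star_trivial]))
  have h := huniq _ _ hT (hT.add_vecMulVec hA.isSymm hAv hα)
  rw [add_mul, left_eq_add, vecMulVec_mul, ← mulVec_transpose, hA.isSymm.eq, mulVec_smul,
    vecMulVec_eq_zero] at h
  exact h.elim hv0 (smul_ne_zero (div_ne_zero (by norm_num) hα) hAu)

theorem exists_posSemidef_transport (hA : A.PosSemidef) (hB : B.PosSemidef)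
    (h : LinearMap.range B.mulVecLin ⊓ LinearMap.ker A.mulVecLin = ⊥) :
    ∃ T : Matrix (Fin n) (Fin n) ℝ, T.PosSemidef ∧ T * A * Tᵀ = B := by
  have hR := (posSemidef_psdSqrt hB).isSymm
  obtain ⟨T, hT, hTAT⟩ := exists_posSemidef_mul_mul_eq_mul_self hA hR
    (ker_mul_mul_le_ker_of_range_inf_ker_eq_bot hA hR (by rwa [range_psdSqrt hB]))
  exact ⟨T, hT, by rw [hT.isSymm.eq, hTAT, psdSqrt_mul_self hB]⟩

end

/-- For psd `A, B`, the following are equivalent: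
(i) a psd transport matrix from `A` to `B` exists;
(ii) an OT matrix exists and all OT matrices agree on `range A`;
(iii) `range B = range (B·A)`;
(iv) `range B ∩ ker A = {0}`. -/
theorem stmt3 {n : ℕ} (A B : Matrix (Fin n) (Fin n) ℝ)
    (hA : A.PosSemidef) (hB : B.PosSemidef) :
    [ (∃ T : Matrix (Fin n) (Fin n) ℝ, T.PosSemidef ∧ T * A * Tᵀ = B),
      ((∃ T : Matrix (Fin n) (Fin n) ℝ, IsOT A B T) ∧
        ∀ T₁ T₂ : Matrix (Fin n) (Fin n) ℝ, IsOT A B T₁ → IsOT A B T₂ → T₁ * A = T₂ * A),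
      (LinearMap.range B.mulVecLin = LinearMap.range (B * A).mulVecLin),
      (LinearMap.range B.mulVecLin ⊓ LinearMap.ker A.mulVecLin = ⊥) ].TFAE := by
  tfae_have 1 → 4
  | ⟨_, hT, h⟩ => range_inf_ker_eq_bot_of_posSemidef_transport hA.isSymm hT h
  tfae_have 4 → 1 := exists_posSemidef_transport hA hB
  tfae_have 3 ↔ 4 := range_eq_range_mul_iff_range_inf_ker_eq_bot hA.isSymm hB.isSymm
  tfae_have 4 → 2 := fun h => by
    obtain ⟨T, hT, hTAT⟩ := exists_posSemidef_transport hA hB h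
    exact ⟨⟨T, isOT_of_posSemidef hA hT hTAT⟩, fun _ _ h₁ h₂ => h₁.mul_eq_mul hA h h₂⟩
  tfae_have 2 → 4
  | ⟨⟨_, hT⟩, huniq⟩ => range_inf_ker_eq_bot_of_isOT_unique hA hT huniq
  tfae_finish
end
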